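/- Suppose the matrices M_1,…,M_r satisfy conditions (H0), (H1) and (H2). Fix j ≠ k in {1,…,r}. Let v ∈ W_{e_k} and let w ∈ W_m with m_j = 0 and t(v) = o(w), so that the product vw ∈ W_{m+e_k} exists. Then A(j, vw) = {a ∈ A : M_j(a, o(v)) = 1 and there exists b ∈ A(j,w) with M_k(b,a) = 1}. -/

import Mathlib

open Matrix

variable {r : ℕ} {A : Type*}

/-- The `j`-th standard basis vector of `ℤ^r`. -/
def evec (r : ℕ) (j : Fin r) : Fin r → ℤ := fun i => if i = j then 1 else 0

/-- `w` represents a word of shape `m` (only its values on `[0,m]` matter):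
`m ≥ 0` and the transition matrices are respected on the box `[0,m]`. -/
def IsWord (M : Fin r → Matrix A A ℤ) (m : Fin r → ℤ) (w : (Fin r → ℤ) → A) : Prop :=
  0 ≤ m ∧ ∀ (l : Fin r → ℤ) (j : Fin r), 0 ≤ l → l + evec r j ≤ m →
    M j (w (l + evec r j)) (w l) = 1

/-- Two representing functions agree on the box `[0,m]`; this is equality of
words of shape `m`. -/
def AgreeOn (m : Fin r → ℤ) (w w' : (Fin r → ℤ) → A) : Prop :=
  ∀ l : Fin r → ℤ, 0 ≤ l → l ≤ m → w l = w' l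

/-- The restriction `w|[k,k+n]`, as a word based at `0`: `(restrictW k w) i = w (i + k)`. -/
def restrictW (k : Fin r → ℤ) (w : (Fin r → ℤ) → A) : (Fin r → ℤ) → A :=
  fun i => w (i + k)

/-- `w` (a word of shape `m`) is `p`-periodic: the translate `τ_p w`, given by
`(τ_p w)(x) = w (x - p)`, agrees with `w` on `[0,m] ∩ [p,p+m]`. -/
def IsPeriodic (p m : Fin r → ℤ) (w : (Fin r → ℤ) → A) : Prop :=
  ∀ x : Fin r → ℤ, 0 ≤ x → x ≤ m → p ≤ x → x ≤ p + m → w (x - p) = w x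

/-- Condition (H0): each `M j` is nonzero. -/
def H0 (M : Fin r → Matrix A A ℤ) : Prop := ∀ j, M j ≠ 0

/-- Condition (H1): unique products of words. -/
def H1 (M : Fin r → Matrix A A ℤ) : Prop :=
  ∀ (m n : Fin r → ℤ) (u v : (Fin r → ℤ) → A),
    IsWord M m u → IsWord M n v → u m = v 0 →
      (∃ w, IsWord M (m + n) w ∧ AgreeOn m w u ∧ AgreeOn n (restrictW m w) v) ∧
      (∀ w w', IsWord M (m + n) w → AgreeOn m w u → AgreeOn n (restrictW m w) v →
        IsWord M (m + n) w' → AgreeOn m w' u → AgreeOn n (restrictW m w') v →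
        AgreeOn (m + n) w w')

/-- Condition (H2): the directed graph on `A` with an edge `a → b` whenever
`M i b a = 1` for some `i` is irreducible. -/
def H2 (M : Fin r → Matrix A A ℤ) : Prop :=
  ∀ a b : A, Relation.ReflTransGen (fun x y => ∃ i, M i y x = 1) a b

/-- Condition (H3): for each nonzero `p ∈ ℤ^r` there is a non-`p`-periodic word. -/
def H3 (M : Fin r → Matrix A A ℤ) : Prop :=
  ∀ p : Fin r → ℤ, p ≠ 0 → ∃ (m : Fin r → ℤ) (w : (Fin r → ℤ) → A),
    IsWord M m w ∧ ¬ IsPeriodic p m w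

/-- Condition (H1a): the matrices commute. -/
def H1a [Fintype A] (M : Fin r → Matrix A A ℤ) : Prop :=
  ∀ i j, M i * M j = M j * M i

/-- Condition (H1b): for `i < j`, the entries of `M i * M j` lie in `{0,1}`. -/
def H1b [Fintype A] (M : Fin r → Matrix A A ℤ) : Prop :=
  ∀ i j, i < j → ∀ a b : A, (M i * M j) b a = 0 ∨ (M i * M j) b a = 1

/-- Condition (H1c): for `i < j < k`, the entries of `M i * M j * M k` lie in `{0,1}`. -/
def H1c [Fintype A] (M : Fin r → Matrix A A ℤ) : Prop :=
  ∀ i j k, i < j → j < k → ∀ a b : A,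
    (M i * M j * M k) b a = 0 ∨ (M i * M j * M k) b a = 1

/-- Condition (H3*). -/
def H3star (M : Fin r → Matrix A A ℤ) : Prop :=
  ∀ (j : Fin r) (m : Fin r → ℤ), m j = 0 → ∀ w : (Fin r → ℤ) → A, IsWord M m w →
    ∃ u u', IsWord M (m + evec r j) u ∧ IsWord M (m + evec r j) u' ∧
      AgreeOn m u w ∧ AgreeOn m u' w ∧ u (evec r j) ≠ u' (evec r j)

/-- `x` represents the product word `uv` of `u ∈ W_m` and `v ∈ W_n`. -/
def IsProd (M : Fin r → Matrix A A ℤ) (m n : Fin r → ℤ)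
    (u v x : (Fin r → ℤ) → A) : Prop :=
  IsWord M (m + n) x ∧ AgreeOn m x u ∧ AgreeOn n (restrictW m x) v

/-- The set `A(j,w)` of possible values `u (e_j)` over extensions
`u ∈ W_{m+e_j}` of `w ∈ W_m`. -/
def ASet (M : Fin r → Matrix A A ℤ) (j : Fin r) (m : Fin r → ℤ)
    (w : (Fin r → ℤ) → A) : Set A :=
  {a | ∃ u : (Fin r → ℤ) → A,
    IsWord M (m + evec r j) u ∧ AgreeOn m u w ∧ u (evec r j) = a}

/-!
An extension of `vw` by one step in direction `j` restricts, on the translate of the box by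
`e_k`, to an extension of `w`, which gives the inclusion `⊆`. Conversely, given `a` and an
extension `u` of `w` with `u (e_j) = b`, glue the unit square with corners `o(v), a, o(w), b`
to the part of `u` above `e_j`. Uniqueness in (H1), applied once to the factorisation
`u = u|[0,e_j] · u|[e_j, e_j + m]` and once to `vw`, shows that the glued word extends `vw`.
-/

section Box

lemma evec_nonneg (j : Fin r) : 0 ≤ evec r j := fun i => by
  unfold evec; split_ifs <;> simp

lemma eq_zero_or_eq_evec_of_mem_box {k : Fin r} {l : Fin r → ℤ} (h₀ : 0 ≤ l)
    (h₁ : l ≤ evec r k) : l = 0 ∨ l = evec r k := by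
  have hl : ∀ i, i ≠ k → l i = 0 := fun i hi =>
    le_antisymm (by simpa [evec, hi] using h₁ i) (h₀ i)
  have hk : l k = 0 ∨ l k = 1 := by
    have := h₀ k; have := h₁ k; simp only [evec, if_true, Pi.zero_apply] at *; omega
  refine hk.imp (fun h => funext fun i => ?_) (fun h => funext fun i => ?_) <;>
    by_cases hi : i = k <;> simp_all [evec]

end Box

section Words

variable {M : Fin r → Matrix A A ℤ}

lemma IsWord.mono {m n : Fin r → ℤ} {w : (Fin r → ℤ) → A} (h : IsWord M n w)
    (hm : 0 ≤ m) (hmn : m ≤ n) : IsWord M m w :=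
  ⟨hm, fun l i hl hle => h.2 l i hl (hle.trans hmn)⟩

lemma IsWord.restrictW {c m n : Fin r → ℤ} {w : (Fin r → ℤ) → A} (h : IsWord M n w)
    (hc : 0 ≤ c) (hm : 0 ≤ m) (hcm : c + m ≤ n) : IsWord M m (restrictW c w) := by
  refine ⟨hm, fun l i hl hle => ?_⟩
  have hle' : l + c + evec r i ≤ n := calc
    l + c + evec r i = c + (l + evec r i) := by abel
    _ ≤ c + m := by gcongr
    _ ≤ n := hcm
  show M i (w (l + evec r i + c)) (w (l + c)) = 1
  rw [add_right_comm]
  exact h.2 (l + c) i (add_nonneg hl hc) hle'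

lemma AgreeOn.mono {m n : Fin r → ℤ} {w w' : (Fin r → ℤ) → A} (h : AgreeOn n w w')
    (hmn : m ≤ n) : AgreeOn m w w' :=
  fun l hl hlm => h l hl (hlm.trans hmn)

lemma AgreeOn.trans {m : Fin r → ℤ} {w w' w'' : (Fin r → ℤ) → A} (h : AgreeOn m w w')
    (h' : AgreeOn m w' w'') : AgreeOn m w w'' :=
  fun l hl hlm => (h l hl hlm).trans (h' l hl hlm)

lemma AgreeOn.restrictW {c m : Fin r → ℤ} {w w' : (Fin r → ℤ) → A}
    (h : AgreeOn (c + m) w w') (hc : 0 ≤ c) :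
    AgreeOn m (restrictW c w) (restrictW c w') := fun l hl hlm =>
  h (l + c) (add_nonneg hl hc) (by rw [add_comm c]; gcongr)

lemma agreeOn_evec {k : Fin r} {w w' : (Fin r → ℤ) → A} (h₀ : w 0 = w' 0)
    (hk : w (evec r k) = w' (evec r k)) : AgreeOn (evec r k) w w' := fun l hl hlk => by
  rcases eq_zero_or_eq_evec_of_mem_box hl hlk with rfl | rfl <;> assumption

lemma H1.exists_isProd (h1 : H1 M) {m n : Fin r → ℤ} {u v : (Fin r → ℤ) → A}
    (hu : IsWord M m u) (hv : IsWord M n v) (huv : u m = v 0) :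
    ∃ x, IsProd M m n u v x :=
  (h1 m n u v hu hv huv).1

lemma H1.agreeOn_of_isProd (h1 : H1 M) {m n : Fin r → ℤ} {u v x y : (Fin r → ℤ) → A}
    (hu : IsWord M m u) (hv : IsWord M n v) (huv : u m = v 0)
    (hx : IsProd M m n u v x) (hy : IsProd M m n u v y) : AgreeOn (m + n) x y :=
  (h1 m n u v hu hv huv).2 x y hx.1 hx.2.1 hx.2.2 hy.1 hy.2.1 hy.2.2

lemma H1.agreeOn_of_agreeOn_restrictW (h1 : H1 M) {m n : Fin r → ℤ} {x y : (Fin r → ℤ) → A}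
    (hx : IsWord M (m + n) x) (hy : IsWord M (m + n) y) (hm : 0 ≤ m) (hn : 0 ≤ n)
    (h₁ : AgreeOn m x y) (h₂ : AgreeOn n (restrictW m x) (restrictW m y)) :
    AgreeOn (m + n) x y :=
  h1.agreeOn_of_isProd (hy.mono hm (le_add_of_nonneg_right hn))
    (hy.restrictW hm hn le_rfl) (by simp [restrictW]) ⟨hx, h₁, h₂⟩
    ⟨hy, fun _ _ _ => rfl, fun _ _ _ => rfl⟩

end Words

section Square

variable {M : Fin r → Matrix A A ℤ} {j k : Fin r}

def squareWord (j k : Fin r) (a₀ aⱼ aₖ aⱼₖ : A) : (Fin r → ℤ) → A :=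
  fun l => if l j = 0 then (if l k = 0 then a₀ else aₖ) else (if l k = 0 then aⱼ else aⱼₖ)

variable {a₀ aⱼ aₖ aⱼₖ : A}

lemma isWord_squareWord (hjk : j ≠ k) (h₀ⱼ : M j aⱼ a₀ = 1) (h₀ₖ : M k aₖ a₀ = 1)
    (hⱼ : M k aⱼₖ aⱼ = 1) (hₖ : M j aⱼₖ aₖ = 1) :
    IsWord M (evec r j + evec r k) (squareWord j k a₀ aⱼ aₖ aⱼₖ) := by
  refine ⟨add_nonneg (evec_nonneg j) (evec_nonneg k), fun l i hl hle => ?_⟩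
  have hi : l i + evec r i i ≤ evec r j i + evec r k i := hle i
  have hli : 0 ≤ l i := hl i
  by_cases hij : i = j
  · subst hij
    have hlj : l i = 0 := by simp [evec, hjk] at hi; omega
    by_cases hlk : l k = 0 <;> simp_all [squareWord, evec, Ne.symm hjk]
  by_cases hik : i = k
  · subst hik
    have hlk : l i = 0 := by simp [evec, Ne.symm hjk] at hi; omega
    by_cases hlj : l j = 0 <;> simp_all [squareWord, evec]
  · simp [evec, hij, hik] at hi; omega

@[simp] lemma squareWord_zero : squareWord j k a₀ aⱼ aₖ aⱼₖ 0 = a₀ := by simp [squareWord]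

@[simp] lemma squareWord_evec_left (hjk : j ≠ k) :
    squareWord j k a₀ aⱼ aₖ aⱼₖ (evec r j) = aⱼ := by simp [squareWord, evec, Ne.symm hjk]

@[simp] lemma squareWord_evec_right (hjk : j ≠ k) :
    squareWord j k a₀ aⱼ aₖ aⱼₖ (evec r k) = aₖ := by simp [squareWord, evec, hjk]

@[simp] lemma squareWord_evec_add_evec (hjk : j ≠ k) :
    squareWord j k a₀ aⱼ aₖ aⱼₖ (evec r j + evec r k) = aⱼₖ := by
  simp [squareWord, evec, hjk, Ne.symm hjk]

end Square

section Extensions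

variable {M : Fin r → Matrix A A ℤ} {j k : Fin r} {m : Fin r → ℤ} {v w x : (Fin r → ℤ) → A}

lemma aSet_subset_of_isProd (hm : 0 ≤ m) (hx : IsProd M (evec r k) m v w x) :
    ASet M j (evec r k + m) x ⊆ {a | M j a (v 0) = 1 ∧ ∃ b ∈ ASet M j m w, M k b a = 1} := by
  rintro _ ⟨U, hU, hUx, rfl⟩
  have hej := evec_nonneg (r := r) j
  have hek := evec_nonneg (r := r) k
  have hU0 : U 0 = v 0 := (hUx 0 le_rfl hx.1.1).trans (hx.2.1 0 le_rfl hek)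
  refine ⟨?_, U (evec r j + evec r k), ⟨restrictW (evec r k) U, ?_, ?_, rfl⟩, ?_⟩
  · simpa [hU0] using
      hU.2 0 j le_rfl (by rw [zero_add]; exact le_add_of_nonneg_left (add_nonneg hek hm))
  · exact hU.restrictW hek (add_nonneg hm hej) (le_of_eq (by abel))
  · exact (hUx.restrictW hek).trans hx.2.2
  · exact hU.2 (evec r j) k hej (le_of_le_of_eq (le_add_of_nonneg_right hm) (by abel))

lemma subset_aSet_of_isProd (h1 : H1 M) (hjk : j ≠ k) (hv : IsWord M (evec r k) v)
    (hw : IsWord M m w) (hvw : v (evec r k) = w 0) (hx : IsProd M (evec r k) m v w x) :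
    {a | M j a (v 0) = 1 ∧ ∃ b ∈ ASet M j m w, M k b a = 1} ⊆ ASet M j (evec r k + m) x := by
  rintro a ⟨haj, _, ⟨u, hu, huw, rfl⟩, hkb⟩
  rw [add_comm] at hu
  have hm := hw.1
  have hej := evec_nonneg (r := r) j
  have hek := evec_nonneg (r := r) k
  have hu0 : u 0 = w 0 := huw 0 le_rfl hm
  have hvk : M k (w 0) (v 0) = 1 := by
    simpa [hvw] using hv.2 0 k le_rfl (by rw [zero_add])
  have huj : M j (u (evec r j)) (w 0) = 1 := by
    simpa [hu0] using hu.2 0 j le_rfl (by rw [zero_add]; exact le_add_of_nonneg_right hm)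
  set q := squareWord j k (v 0) a (w 0) (u (evec r j))
  have hq : IsWord M (evec r j + evec r k) q := isWord_squareWord hjk haj hvk hkb huj
  have htop : IsWord M m (restrictW (evec r j) u) := hu.restrictW hej hm le_rfl
  obtain ⟨U, hU⟩ := h1.exists_isProd hq htop (by simp [q, hjk, restrictW])
  have hUq : ∀ l, 0 ≤ l → l ≤ evec r j + evec r k → U l = q l := hU.2.1
  have hUu : AgreeOn (evec r j + m) (restrictW (evec r k) U) u := by
    refine h1.agreeOn_of_agreeOn_restrictW (hU.1.restrictW hek (add_nonneg hej hm)
      (le_of_eq (by abel))) hu hej hm (agreeOn_evec ?_ ?_) fun l hl hlm => ?_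
    · simpa [q, restrictW, hjk, hu0] using hUq (evec r k) hek (le_add_of_nonneg_left hej)
    · simpa [q, restrictW, hjk] using hUq _ (add_nonneg hej hek) le_rfl
    · simpa [restrictW, add_assoc] using hU.2.2 l hl hlm
  have hUvw : IsProd M (evec r k) m v w U := by
    refine ⟨hU.1.mono (add_nonneg hek hm) ?_, agreeOn_evec ?_ ?_,
      (hUu.mono (le_add_of_nonneg_left hej)).trans huw⟩
    · exact le_of_le_of_eq (le_add_of_nonneg_left hej) (add_assoc _ _ _).symm
    · simpa [q] using hUq 0 le_rfl (add_nonneg hej hek)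
    · simpa [q, hjk, hvw] using hUq (evec r k) hek (le_add_of_nonneg_left hej)
  refine ⟨U, hU.1.mono (add_nonneg (add_nonneg hek hm) hej) (le_of_eq (by abel)),
    h1.agreeOn_of_isProd hv hw hvw hUvw hx, ?_⟩
  simpa [q, hjk] using hUq (evec r j) hej (le_add_of_nonneg_right hek)

end Extensions

theorem stmt_12_general
    (M : Fin r → Matrix A A ℤ)
    (h1 : H1 M)
    (j k : Fin r) (hjk : j ≠ k)
    (m : Fin r → ℤ)
    (v w : (Fin r → ℤ) → A) (hv : IsWord M (evec r k) v) (hw : IsWord M m w)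
    (hvw : v (evec r k) = w 0) :
    ∀ x : (Fin r → ℤ) → A, IsProd M (evec r k) m v w x →
      ASet M j (evec r k + m) x =
        {a : A | M j a (v 0) = 1 ∧ ∃ b ∈ ASet M j m w, M k b a = 1} := fun _ hx =>
  (aSet_subset_of_isProd hw.1 hx).antisymm (subset_aSet_of_isProd h1 hjk hv hw hvw hx)

/-- under (H0), (H1), (H2), for `j ≠ k`, `v ∈ W_{e_k}` and
`w ∈ W_m` with `m j = 0` and `t(v) = o(w)`, the product `vw` satisfies
`A(j,vw) = {a : M j a (o v) = 1 ∧ ∃ b ∈ A(j,w), M k b a = 1}`. -/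
theorem stmt_12 [Fintype A] [Nonempty A] (hr : 0 < r)
    (M : Fin r → Matrix A A ℤ)
    (hM : ∀ j (a b : A), M j b a = 0 ∨ M j b a = 1)
    (h0 : H0 M) (h1 : H1 M) (h2 : H2 M)
    (j k : Fin r) (hjk : j ≠ k)
    (m : Fin r → ℤ) (hmj : m j = 0)
    (v w : (Fin r → ℤ) → A) (hv : IsWord M (evec r k) v) (hw : IsWord M m w)
    (hvw : v (evec r k) = w 0) :
    ∀ x : (Fin r → ℤ) → A, IsProd M (evec r k) m v w x →
      ASet M j (evec r k + m) x =
        {a : A | M j a (v 0) = 1 ∧ ∃ b ∈ ASet M j m w, M k b a = 1} :=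
  stmt_12_general M h1 j k hjk m v w hv hw hvw
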